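/- arXiv:1912.00814 — 2 statements merged into one kernel-verified Lean document; each statement's English description precedes it below -/
import Mathlib

section
/- If D is a strongly connected digraph and y is a vertex of in-degree one with unique in-neighbor x, then the line generated by the ordered pair (x,y) equals the entire vertex set V. -/
open scoped Classical

/-- `stepsTo A n u v` : there is a directed walk of length `n` from `u` to `v`
in the digraph with arc relation `A`. -/
def stepsTo {V : Type*} (A : V → V → Prop) : ℕ → V → V → Prop
  | 0, u, v => u = v
  | n+1, u, v => ∃ w, A u w ∧ stepsTo A n w v

/-- A digraph is strongly connected if every vertex is reachable from every vertex. -/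
def StronglyConnected {V : Type*} (A : V → V → Prop) : Prop :=
  ∀ u v : V, ∃ n : ℕ, stepsTo A n u v

/-- The directed distance: the length of a shortest directed path from `u` to `v`. -/
noncomputable def ddist {V : Type*} (A : V → V → Prop) (u v : V) : ℕ :=
  sInf {n : ℕ | stepsTo A n u v}

/-- `btw A u v z` means `z ∈ [u,v]`, i.e. `z` lies on a shortest dipath from `u` to `v`. -/
def btw {V : Type*} (A : V → V → Prop) (u v z : V) : Prop :=
  ddist A u v = ddist A u z + ddist A z v

/-- The line generated by the ordered pair `(u,v)`:
`{z : u ∈ [z,v] or v ∈ [u,z] or z ∈ [u,v]}`. -/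
def line {V : Type*} (A : V → V → Prop) (u v : V) : Set V :=
  {z | btw A z v u ∨ btw A u z v ∨ btw A u v z}

/-- `L(D)`: the set of all lines generated by ordered pairs of distinct vertices. -/
def lineSet {V : Type*} (A : V → V → Prop) : Set (Set V) :=
  {S | ∃ u v : V, u ≠ v ∧ S = line A u v}


lemma stepsTo_append_one {V : Type*} (A : V → V → Prop) :
    ∀ n (u w v : V), stepsTo A n u w → A w v → stepsTo A (n+1) u v := by
  intro n
  induction n with
  | zero => intro u w v h ha; cases h; exact ⟨v, ha, rfl⟩
  | succ n ih =>
    rintro u w v ⟨t, hut, htw⟩ ha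
    exact ⟨t, hut, ih t w v htw ha⟩

lemma stepsTo_last {V : Type*} (A : V → V → Prop) :
    ∀ n (u v : V), stepsTo A (n+1) u v → ∃ w, stepsTo A n u w ∧ A w v := by
  intro n
  induction n with
  | zero => rintro u v ⟨w, hw, h0⟩; cases h0; exact ⟨u, rfl, hw⟩
  | succ n ih =>
    rintro u v ⟨w, huw, hwv⟩
    obtain ⟨t, htw, hta⟩ := ih w v hwv
    exact ⟨t, ⟨w, huw, htw⟩, hta⟩

lemma ddist_spec {V : Type*} (A : V → V → Prop) (hsc : StronglyConnected A)
    (u v : V) : stepsTo A (ddist A u v) u v := by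
  have : {n : ℕ | stepsTo A n u v}.Nonempty := hsc u v
  exact Nat.sInf_mem this

lemma ddist_le {V : Type*} (A : V → V → Prop) {n : ℕ} {u v : V}
    (h : stepsTo A n u v) : ddist A u v ≤ n := Nat.sInf_le h


theorem stmt1 {V : Type*} [Fintype V] (A : V → V → Prop)
    (hsc : StronglyConnected A) (x y : V) (hxy : x ≠ y)
    (harc : A x y) (huniq : ∀ z : V, A z y → z = x) :
    line A x y = (Set.univ : Set V) := by
  ext z
  simp only [Set.mem_univ, iff_true, line, Set.mem_setOf_eq]
  have hdxy : ddist A x y = 1 := by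
    have h1 : ddist A x y ≤ 1 := ddist_le A ⟨y, harc, rfl⟩
    have h0 : ddist A x y ≠ 0 := by
      intro h
      have := ddist_spec A hsc x y
      rw [h] at this
      exact hxy this
    omega
  have hdyy : ddist A y y = 0 := Nat.le_zero.mp (ddist_le A (show stepsTo A 0 y y from rfl))
  by_cases hz : z = y
  · subst hz
    right; right
    unfold _root_.btw
    omega
  · left
    unfold _root_.btw
    rw [hdxy]
    have hle : ddist A z y ≤ ddist A z x + 1 :=
      ddist_le A (stepsTo_append_one A _ z x y (ddist_spec A hsc z x) harc)
    have hge : ddist A z x + 1 ≤ ddist A z y := by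
      have hst := ddist_spec A hsc z y
      have hn0 : ddist A z y ≠ 0 := by
        intro h; rw [h] at hst; exact hz hst
      obtain ⟨m, hm⟩ : ∃ m, ddist A z y = m + 1 := ⟨ddist A z y - 1, by omega⟩
      rw [hm] at hst
      obtain ⟨w, hzw, hwy⟩ := stepsTo_last A m z y hst
      have := huniq w hwy
      subst this
      have := ddist_le A hzw
      omega
    omega
end

section
/- Let D be a strongly connected oriented graph, uv an arc, and x a vertex distinct from u and v with xu and xv both arcs of D. If x belongs to the line generated by (u,v), then d(u,x) ≥ 3. -/
open scoped Classical

lemma ddist_mem {V : Type*} {A : V → V → Prop} (hsc : StronglyConnected A)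
    (u v : V) : stepsTo A (ddist A u v) u v := by
  have : {n : ℕ | stepsTo A n u v}.Nonempty := hsc u v
  exact Nat.sInf_mem this

lemma ddist_eq_one {V : Type*} {A : V → V → Prop} (hsc : StronglyConnected A)
    {u v : V} (h : A u v) (hne : u ≠ v) : ddist A u v = 1 := by
  have hle : ddist A u v ≤ 1 := Nat.sInf_le ⟨v, h, rfl⟩
  have hne0 : ddist A u v ≠ 0 := by
    intro h0
    have := ddist_mem hsc u v
    rw [h0] at this
    exact hne this
  omega

theorem stmt6 {V : Type*} [Fintype V] (A : V → V → Prop)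
    (hanti : ∀ u v : V, ¬ (A u v ∧ A v u))
    (hsc : StronglyConnected A)
    (u v x : V) (huv : A u v) (hxu : x ≠ u) (hxv : x ≠ v)
    (h1 : A x u) (h2 : A x v) (hmem : x ∈ line A u v) :
    3 ≤ ddist A u x := by
  have hne_uv : u ≠ v := by rintro rfl; exact hanti u u ⟨huv, huv⟩
  have duv : ddist A u v = 1 := ddist_eq_one hsc huv hne_uv
  have dxu : ddist A x u = 1 := ddist_eq_one hsc h1 hxu
  have dxv : ddist A x v = 1 := ddist_eq_one hsc h2 hxv
  have dvx2 : 2 ≤ ddist A v x := by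
    have hne0 : ddist A v x ≠ 0 := by
      intro h0
      have := ddist_mem hsc v x
      rw [h0] at this
      exact hxv this.symm
    have hne1 : ddist A v x ≠ 1 := by
      intro h1'
      have := ddist_mem hsc v x
      rw [h1'] at this
      obtain ⟨w, hvw, hwx⟩ := this
      cases hwx
      exact hanti v x ⟨hvw, h2⟩
    omega
  rcases hmem with h | h | h
  · exfalso
    unfold _root_.btw at h
    rw [dxv, dxu, duv] at h
    omega
  · unfold _root_.btw at h
    rw [duv] at h
    omega
  · exfalso
    unfold _root_.btw at h
    rw [duv, dxv] at h
    have h0 : ddist A u x = 0 := by omega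
    have := ddist_mem hsc u x
    rw [h0] at this
    exact hxu this.symm
end
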